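/- arXiv:0908.3331 — 6 statements merged into one kernel-verified Lean document; each statement's English description precedes it below -/
import Mathlib

section
/- Let X ⊆ ℝⁿ be a convex set and let G ≤ S_n be a group of permutations, acting on ℝⁿ by permuting coordinates, such that X^g = X for all g ∈ G and G acts transitively on the coordinate indices {1,…,n}. Then for every t ∈ ℝ, the affine hyperplane H_t = {x ∈ ℝⁿ : ∑ᵢ xᵢ = tn} meets X if and only if its center (t,…,t)ᵀ lies in X. -/
/-!
Averaging a point `x ∈ X` over the coordinate permutations in `G` gives a point of `X` (by
convexity and invariance) whose coordinates are permuted among themselves by `G`, hence all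
equal by transitivity. Permuting coordinates preserves the coordinate sum, so the average lies on
the same hyperplane `H_t` as `x`, and the only constant vector there is the center `t • 1`.
-/

variable {ι : Type*}

noncomputable def orbitAverage (G : Subgroup (Equiv.Perm ι)) [Fintype G] (x : ι → ℝ) :
    ι → ℝ :=
  (Fintype.card G : ℝ)⁻¹ • ∑ g : G, fun i => x ((g : Equiv.Perm ι)⁻¹ i)

section

variable (G : Subgroup (Equiv.Perm ι)) [Fintype G]

theorem orbitAverage_apply (x : ι → ℝ) (i : ι) :
    orbitAverage G x i = (Fintype.card G : ℝ)⁻¹ * ∑ g : G, x ((g : Equiv.Perm ι)⁻¹ i) := by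
  simp only [orbitAverage, Pi.smul_apply, Finset.sum_apply, smul_eq_mul]

theorem orbitAverage_mem {X : Set (ι → ℝ)} (hX : Convex ℝ X)
    (hinv : ∀ g ∈ G, ∀ x ∈ X, (fun i => x (g⁻¹ i)) ∈ X) {x : ι → ℝ} (hx : x ∈ X) :
    orbitAverage G x ∈ X := by
  have hcard : (0 : ℝ) < Fintype.card G := by exact_mod_cast Fintype.card_pos
  rw [orbitAverage, Finset.smul_sum]
  refine hX.sum_mem (fun _ _ => inv_nonneg.mpr hcard.le) ?_ (fun g _ => hinv g g.2 x hx)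
  rw [Finset.sum_const, Finset.card_univ, nsmul_eq_mul, mul_inv_cancel₀ hcard.ne']

theorem orbitAverage_apply_perm (x : ι → ℝ) {σ : Equiv.Perm ι} (hσ : σ ∈ G) (i : ι) :
    orbitAverage G x (σ i) = orbitAverage G x i := by
  rw [orbitAverage_apply, orbitAverage_apply, ← Equiv.sum_comp (Equiv.mulLeft (⟨σ, hσ⟩ : G))]
  simp [mul_inv_rev]

theorem sum_orbitAverage [Fintype ι] (x : ι → ℝ) : ∑ i, orbitAverage G x i = ∑ i, x i := by
  have hcard : (Fintype.card G : ℝ) ≠ 0 := by exact_mod_cast Fintype.card_ne_zero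
  have hperm : ∀ g : G, ∑ i, x ((g : Equiv.Perm ι)⁻¹ i) = ∑ i, x i := fun g =>
    Equiv.sum_comp (g : Equiv.Perm ι)⁻¹ x
  simp only [orbitAverage_apply, ← Finset.mul_sum]
  rw [Finset.sum_comm, Finset.sum_congr rfl (fun g _ => hperm g), Finset.sum_const,
    Finset.card_univ, nsmul_eq_mul, inv_mul_cancel_left₀ hcard]

end

theorem eq_const_of_sum_eq [Fintype ι] {y : ι → ℝ} (hconst : ∀ i j, y i = y j) {t : ℝ}
    (hsum : ∑ i, y i = t * Fintype.card ι) : y = fun _ => t := by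
  funext i
  have : Nonempty ι := ⟨i⟩
  have hcard : (Fintype.card ι : ℝ) ≠ 0 := by exact_mod_cast Fintype.card_ne_zero
  refine mul_right_cancel₀ hcard ?_
  rw [← hsum, Finset.sum_congr rfl (fun j _ => hconst j i), Finset.sum_const, Finset.card_univ,
    nsmul_eq_mul, mul_comm]

theorem orbitAverage_eq_const [Fintype ι] {G : Subgroup (Equiv.Perm ι)} [Fintype G]
    (htrans : ∀ i j : ι, ∃ g ∈ G, g i = j) {x : ι → ℝ} {t : ℝ}
    (hsum : ∑ i, x i = t * Fintype.card ι) : orbitAverage G x = fun _ => t := by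
  refine eq_const_of_sum_eq (fun i j => ?_) (by rw [sum_orbitAverage, hsum])
  obtain ⟨σ, hσ, rfl⟩ := htrans j i
  exact orbitAverage_apply_perm G x hσ j

theorem layer_feasible_iff_center_feasible_general (n : ℕ)
    (X : Set (Fin n → ℝ)) (hX : Convex ℝ X) (G : Subgroup (Equiv.Perm (Fin n)))
    (hinv : ∀ g ∈ G, (fun x : Fin n → ℝ => fun i => x (g⁻¹ i)) '' X = X)
    (htrans : ∀ i j : Fin n, ∃ g ∈ G, g i = j) :
    ∀ t : ℝ, (∃ x ∈ X, ∑ i, x i = t * n) ↔ (fun _ : Fin n => t) ∈ X := by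
  intro t
  constructor
  · rintro ⟨x, hx, hsum⟩
    have : Fintype G := Fintype.ofFinite G
    rw [← orbitAverage_eq_const htrans (x := x) (by rwa [Fintype.card_fin])]
    exact orbitAverage_mem G hX (fun g hg y hy => hinv g hg ▸ ⟨y, hy, rfl⟩) hx
  · intro h
    exact ⟨_, h, by simp [mul_comm]⟩

/-- If a convex set `X ⊆ ℝⁿ` is invariant under a group `G` of coordinate
permutations acting transitively on the indices, then for every `t`, the hyperplane
`H_t = {x | ∑ xᵢ = tn}` meets `X` iff its center `(t,…,t)` lies in `X`. -/
theorem layer_feasible_iff_center_feasible (n : ℕ) (hn : 0 < n)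
    (X : Set (Fin n → ℝ)) (hX : Convex ℝ X) (G : Subgroup (Equiv.Perm (Fin n)))
    (hinv : ∀ g ∈ G, (fun x : Fin n → ℝ => fun i => x (g⁻¹ i)) '' X = X)
    (htrans : ∀ i j : Fin n, ∃ g ∈ G, g i = j) :
    ∀ t : ℝ, (∃ x ∈ X, ∑ i, x i = t * n) ↔ (fun _ : Fin n => t) ∈ X :=
  layer_feasible_iff_center_feasible_general n X hX G hinv htrans
end

section
/- Let X ⊆ ℝⁿ be a convex set, let G ≤ S_n act transitively on the coordinate indices {1,…,n} with X^g = X for all g ∈ G, and let a ∈ ℝ be such that (a,…,a)ᵀ ∈ X and (a,…,a)ᵀ maximizes x ↦ ∑ᵢ xᵢ over X. Then X contains an integer point if and only if there exists an integer point x ∈ X ∩ ℤⁿ whose coordinate sum k = ∑ᵢ xᵢ satisfies n⌊a⌋ ≤ k ≤ ⌊na⌋. In particular, it suffices to search the ⌊na⌋-th layer down to the (n⌊a⌋)-th layer, i.e., at most n + 1 layers, to either find a feasible integer point or conclude that none exists. -/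
open scoped BigOperators

/-!
Averaging an integer point `x ∈ X` over the orbit of the transitive group `G` gives, by
convexity and invariance, the constant point with value `(∑ xᵢ) / n`. If `∑ xᵢ < n⌊a⌋`,
then `⌊a⌋` lies between this value and `a`, so the integer point `(⌊a⌋, …, ⌊a⌋)` lies on the
segment joining two constant points of `X`. Every integer point of `X` has coordinate sum at
most `⌊na⌋`, since `(a, …, a)` maximizes the sum.
-/

open Finset

section PermInvariant

variable {ι : Type*} (G : Subgroup (Equiv.Perm ι)) [Fintype G]

theorem sum_subgroup_apply_inv_eq_of_transitive {M : Type*} [AddCommMonoid M]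
    (htrans : ∀ i j : ι, ∃ g ∈ G, g i = j) (x : ι → M) (i j : ι) :
    ∑ g : G, x ((g : Equiv.Perm ι)⁻¹ i) = ∑ g : G, x ((g : Equiv.Perm ι)⁻¹ j) := by
  obtain ⟨h, hG, rfl⟩ := htrans i j
  exact Fintype.sum_bijective (fun g : G => ⟨h, hG⟩ * g) (Group.mulLeft_bijective _) _ _
    fun g => by simp [mul_inv_rev]

theorem card_mul_sum_subgroup_apply_inv_eq_of_transitive [Fintype ι]
    (htrans : ∀ i j : ι, ∃ g ∈ G, g i = j) (x : ι → ℝ) (i : ι) :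
    Fintype.card ι * ∑ g : G, x ((g : Equiv.Perm ι)⁻¹ i) = Fintype.card G * ∑ j, x j := by
  calc (Fintype.card ι : ℝ) * ∑ g : G, x ((g : Equiv.Perm ι)⁻¹ i)
      = ∑ j : ι, ∑ g : G, x ((g : Equiv.Perm ι)⁻¹ j) := by
        rw [Finset.sum_congr rfl fun j _ => sum_subgroup_apply_inv_eq_of_transitive G htrans x j i,
          sum_const, card_univ, nsmul_eq_mul]
    _ = ∑ g : G, ∑ j : ι, x ((g : Equiv.Perm ι)⁻¹ j) := Finset.sum_comm
    _ = Fintype.card G * ∑ j, x j := by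
        simp [Equiv.sum_comp]

theorem Convex.orbit_average_mem {X : Set (ι → ℝ)} (hX : Convex ℝ X)
    (hinv : ∀ g ∈ G, Set.MapsTo (fun x i => x (g⁻¹ i)) X X) {x : ι → ℝ} (hx : x ∈ X) :
    (∑ g : G, (Fintype.card G : ℝ)⁻¹ • fun i => x ((g : Equiv.Perm ι)⁻¹ i)) ∈ X := by
  have : 0 < Fintype.card G := Fintype.card_pos
  refine hX.sum_mem (fun _ _ => by positivity) ?_ fun g _ => hinv g g.2 hx
  simp

theorem Convex.const_sum_div_card_mem_of_transitive [Fintype ι] {X : Set (ι → ℝ)}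
    (hX : Convex ℝ X)
    (hinv : ∀ g ∈ G, Set.MapsTo (fun x i => x (g⁻¹ i)) X X)
    (htrans : ∀ i j : ι, ∃ g ∈ G, g i = j) {x : ι → ℝ} (hx : x ∈ X) :
    (fun _ => (∑ i, x i) / Fintype.card ι) ∈ X := by
  convert hX.orbit_average_mem G hinv hx using 1
  ext i
  have hι : 0 < Fintype.card ι := Fintype.card_pos_iff.2 ⟨i⟩
  have hG : 0 < Fintype.card G := Fintype.card_pos
  have := card_mul_sum_subgroup_apply_inv_eq_of_transitive G htrans x i
  simp only [Finset.sum_apply, Pi.smul_apply, smul_eq_mul, ← Finset.mul_sum]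
  field_simp
  linarith

end PermInvariant

theorem Convex.const_mem_of_le_of_le {ι : Type*} {X : Set (ι → ℝ)} (hX : Convex ℝ X)
    {p q r : ℝ} (hp : (fun _ => p) ∈ X) (hq : (fun _ => q) ∈ X) (hpr : p ≤ r) (hrq : r ≤ q) :
    (fun _ => r) ∈ X :=
  (hX.linear_preimage (LinearMap.const : ℝ →ₗ[ℝ] ι → ℝ)).ordConnected.out hp hq ⟨hpr, hrq⟩

theorem integer_point_in_bounded_layers_general (n : ℕ)
    (X : Set (Fin n → ℝ)) (hX : Convex ℝ X) (G : Subgroup (Equiv.Perm (Fin n)))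
    (hinv : ∀ g ∈ G, (fun x : Fin n → ℝ => fun i => x (g⁻¹ i)) '' X = X)
    (htrans : ∀ i j : Fin n, ∃ g ∈ G, g i = j)
    (a : ℝ) (ha : (fun _ : Fin n => a) ∈ X)
    (hmax : ∀ x ∈ X, ∑ i, x i ≤ n * a) :
    (∃ x : Fin n → ℤ, (fun i => (x i : ℝ)) ∈ X) ↔
      ∃ x : Fin n → ℤ, (fun i => (x i : ℝ)) ∈ X ∧
        n * ⌊a⌋ ≤ ∑ i, x i ∧ ∑ i, x i ≤ ⌊(n : ℝ) * a⌋ := by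
  classical
  have sum_le_floor : ∀ x : Fin n → ℤ, (fun i => (x i : ℝ)) ∈ X → ∑ i, x i ≤ ⌊(n : ℝ) * a⌋ :=
    fun x hx => Int.le_floor.2 (by simpa using hmax _ hx)
  refine ⟨fun ⟨x, hx⟩ => ?_, fun ⟨x, hx, _⟩ => ⟨x, hx⟩⟩
  rcases le_or_gt (n * ⌊a⌋) (∑ i, x i) with hlow | hlow
  · exact ⟨x, hx, hlow, sum_le_floor x hx⟩
  have hn : 0 < n := Nat.pos_of_ne_zero (by rintro rfl; simp at hlow)
  have havg := hX.const_sum_div_card_mem_of_transitive G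
    (fun g hg => Set.mapsTo_iff_image_subset.2 (hinv g hg).le) htrans hx
  have havg_lt : (∑ i, (x i : ℝ)) / n < ⌊a⌋ := by
    rw [div_lt_iff₀ (by positivity), mul_comm]
    exact_mod_cast hlow
  have hfloor : (fun _ => ((⌊a⌋ : ℤ) : ℝ)) ∈ X := by
    refine hX.const_mem_of_le_of_le ?_ ha havg_lt.le (Int.floor_le a)
    simpa using havg
  exact ⟨fun _ => ⌊a⌋, hfloor, by simp, sum_le_floor _ hfloor⟩

/-- Let `X ⊆ ℝⁿ` be convex and invariant under a transitive group of
coordinate permutations, and let `(a,…,a) ∈ X` maximize `x ↦ ∑ xᵢ` over `X`. Then `X`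
contains an integer point iff it contains an integer point whose coordinate sum `k`
satisfies `n⌊a⌋ ≤ k ≤ ⌊na⌋`. -/
theorem integer_point_in_bounded_layers (n : ℕ) (hn : 0 < n)
    (X : Set (Fin n → ℝ)) (hX : Convex ℝ X) (G : Subgroup (Equiv.Perm (Fin n)))
    (hinv : ∀ g ∈ G, (fun x : Fin n → ℝ => fun i => x (g⁻¹ i)) '' X = X)
    (htrans : ∀ i j : Fin n, ∃ g ∈ G, g i = j)
    (a : ℝ) (ha : (fun _ : Fin n => a) ∈ X)
    (hmax : ∀ x ∈ X, ∑ i, x i ≤ n * a) :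
    (∃ x : Fin n → ℤ, (fun i => (x i : ℝ)) ∈ X) ↔
      ∃ x : Fin n → ℤ, (fun i => (x i : ℝ)) ∈ X ∧
        n * ⌊a⌋ ≤ ∑ i, x i ∧ ∑ i, x i ≤ ⌊(n : ℝ) * a⌋ :=
  integer_point_in_bounded_layers_general n X hX G hinv htrans a ha hmax
end

section
/- Let n ≥ 2, let X ⊆ ℝⁿ be convex, and let G ≤ S_n act (⌊n/2⌋+1)-transitively on the coordinate indices {1,…,n} with X^g = X for all g ∈ G. Let x ∈ X ∩ ℤⁿ with ∑ᵢ xᵢ = k, and suppose x is not a neighbor of the k-th layer. Then there exists an integer point y ∈ X ∩ ℤⁿ with ∑ᵢ yᵢ = k and ‖y − m_k‖ < ‖x − m_k‖, where m_k = (k/n,…,k/n)ᵀ is the center of the k-th layer. -/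
/-!
Write `k = n d + r` with `0 ≤ r < n` and fix an `r`-set `R` of coordinates; `y = d + 𝟙_R` is a
neighbor of the layer. For integer points `w` of the layer, the order of `∑ (wᵢ - c)²` does not
depend on the centre `c`, and `∑ (wᵢ - d)² ≥ ∑ (wᵢ - d) = r` with equality at `y`, so `y` is
closest to `m_k`; it remains to show `y ∈ X`.

An exchange argument gives `r`-sets `S₁, S₂` with `∑_{S₁} x ≤ r (d + 1) ≤ ∑_{S₂} x`. An element
of `G` can be prescribed on `⌊n/2⌋ + 1` points, and of a set and its complement one has at most
`⌊n/2⌋` elements; hence `G` maps `S₁` and `S₂` onto `R`, and the setwise stabiliser of `R` in `G`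
is transitive on `R` and on `Rᶜ`. A point `v` on the segment between the two permuted copies of
`x` has `∑_R v = r (d + 1)`, and averaging `v` over that stabiliser yields `y`.
-/

open Finset Function Equiv MulAction
open scoped Pointwise

section Segment

variable {E : Type*} [AddCommGroup E] [Module ℝ E]

theorem exists_mem_segment_apply_eq (f : E →ₗ[ℝ] ℝ) {a b : E} {c : ℝ} (ha : f a ≤ c)
    (hb : c ≤ f b) : ∃ p ∈ segment ℝ a b, f p = c := by
  have hc : c ∈ f.toAffineMap '' segment ℝ a b := by
    rw [image_segment, LinearMap.coe_toAffineMap, segment_eq_Icc (ha.trans hb)]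
    exact ⟨ha, hb⟩
  simpa using hc

theorem apply_eq_of_mem_segment (f : E →ₗ[ℝ] ℝ) {a b p : E} (hab : f a = f b)
    (hp : p ∈ segment ℝ a b) : f p = f a := by
  have hfp : f.toAffineMap p ∈ f.toAffineMap '' segment ℝ a b := Set.mem_image_of_mem _ hp
  rwa [image_segment, LinearMap.coe_toAffineMap, hab, segment_same, ← hab] at hfp

end Segment

variable {ι : Type*}

theorem sum_sub_sq_le_sum_sub_sq_of_sum_eq {s : Finset ι} {u v : ι → ℝ}
    (huv : ∑ i ∈ s, u i = ∑ i ∈ s, v i) {c' : ℝ}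
    (h : ∑ i ∈ s, (u i - c') ^ 2 ≤ ∑ i ∈ s, (v i - c') ^ 2) (c : ℝ) :
    ∑ i ∈ s, (u i - c) ^ 2 ≤ ∑ i ∈ s, (v i - c) ^ 2 := by
  have expand : ∀ f : ι → ℝ, ∑ i ∈ s, (f i - c) ^ 2 =
      ∑ i ∈ s, (f i - c') ^ 2 - 2 * (c - c') * ∑ i ∈ s, f i + #s * (c ^ 2 - c' ^ 2) := by
    intro f
    rw [mul_sum, ← nsmul_eq_mul, ← sum_const, ← sum_sub_distrib, ← sum_add_distrib]
    exact sum_congr rfl fun i _ => by ring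
  rw [expand u, expand v, huv]
  linarith

theorem sum_apply_inv_of_smul_finset_eq [DecidableEq ι] {M : Type*} [AddCommMonoid M]
    {g : Perm ι} {A B : Finset ι} (h : g • A = B) (v : ι → M) :
    ∑ i ∈ B, v (g⁻¹ i) = ∑ i ∈ A, v i :=
  (sum_equiv g (fun i => by rw [← h, ← Perm.smul_def, smul_mem_smul_finset_iff])
    (fun i _ => by simp)).symm

variable [Fintype ι]

theorem exists_mem_eqOn_of_card_le {G : Subgroup (Perm ι)} {m : ℕ}
    [IsMultiplyPretransitive G ι m] (hm : m ≤ Fintype.card ι) (π : Perm ι) {W : Finset ι}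
    (hW : #W ≤ m) : ∃ g ∈ G, ∀ i ∈ W, g i = π i := by
  obtain ⟨W', hWW', hW'⟩ := exists_superset_card_eq hW hm
  let e : Fin m ↪ ι := (W'.equivFinOfCardEq hW').symm.toEmbedding.trans (Embedding.subtype _)
  obtain ⟨g, hg⟩ := exists_smul_eq G e (e.trans π.toEmbedding)
  refine ⟨g, g.2, fun i hi => ?_⟩
  have hei : e (W'.equivFinOfCardEq hW' ⟨i, hWW' hi⟩) = i := by simp [e]
  simpa [hei, Subgroup.smul_def, Perm.smul_def] using
    congr($hg (W'.equivFinOfCardEq hW' ⟨i, hWW' hi⟩))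

variable [DecidableEq ι]

theorem Finset.smul_finset_compl {α : Type*} [Group α] [MulAction α ι] (a : α) (s : Finset ι) :
    a • sᶜ = (a • s)ᶜ := by
  simp only [compl_eq_univ_sdiff, smul_finset_sdiff, smul_finset_univ]

/-- A maximising `m`-set works: otherwise trading an element with `t i ≤ 0` for an outside one
with `t j ≥ 1` increases the sum. -/
theorem exists_card_eq_min_le_sum (t : ι → ℤ) {m : ℕ} (hm : m ≤ Fintype.card ι) :
    ∃ S : Finset ι, #S = m ∧ min (m : ℤ) (∑ i, t i) ≤ ∑ i ∈ S, t i := by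
  obtain ⟨S, hS, hmax⟩ := exists_max_image (powersetCard m univ) (fun S => ∑ i ∈ S, t i)
    (powersetCard_nonempty.2 (by simpa using hm))
  rw [mem_powersetCard_univ] at hS
  refine ⟨S, hS, ?_⟩
  by_contra! hlt
  obtain ⟨i, hiS, hi⟩ : ∃ i ∈ S, t i < 1 :=
    exists_lt_of_sum_lt (by simpa [hS] using (lt_min_iff.1 hlt).1)
  obtain ⟨j, hjS, hj⟩ : ∃ j ∈ Sᶜ, 0 < t j := by
    refine exists_lt_of_sum_lt ?_
    have := sum_add_sum_compl S t
    simp only [sum_const_zero]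
    linarith [(lt_min_iff.1 hlt).2]
  have hj' : j ∉ S.erase i := fun h => mem_compl.1 hjS (mem_of_mem_erase h)
  have hswap := hmax (insert j (S.erase i)) (by
    rw [mem_powersetCard_univ, card_insert_of_notMem hj', card_erase_of_mem hiS, hS]
    have := card_pos.2 ⟨i, hiS⟩
    omega)
  rw [sum_insert hj', sum_erase_eq_sub hiS] at hswap
  omega

theorem Convex.exists_mem_invariant {X : Set (ι → ℝ)} (hX : Convex ℝ X) (K : Subgroup (Perm ι))
    (hXK : ∀ κ ∈ K, ∀ v ∈ X, (fun i => v (κ⁻¹ i)) ∈ X) {v : ι → ℝ} (hv : v ∈ X) :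
    ∃ z ∈ X, (∀ κ ∈ K, ∀ i, z (κ i) = z i) ∧
      ∀ s : Finset ι, (∀ κ ∈ K, κ • s = s) → ∑ i ∈ s, z i = ∑ i ∈ s, v i := by
  classical
  have hN : (Fintype.card K : ℝ) ≠ 0 := Nat.cast_ne_zero.2 Fintype.card_ne_zero
  refine ⟨∑ κ : K, (Fintype.card K : ℝ)⁻¹ • fun i => v ((κ : Perm ι)⁻¹ i),
    hX.sum_mem (fun _ _ => by positivity) (by simp [hN]) (fun κ _ => hXK κ κ.2 v hv), ?_, ?_⟩
  · intro σ hσ i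
    simp only [Finset.sum_apply, Pi.smul_apply, smul_eq_mul]
    exact Fintype.sum_equiv (Equiv.mulLeft (⟨σ, hσ⟩ : K)⁻¹) _ _ fun κ => by simp [mul_inv_rev]
  · intro s hs
    simp only [Finset.sum_apply, Pi.smul_apply, smul_eq_mul]
    simp_rw [sum_comm (s := s), ← mul_sum]
    rw [sum_congr rfl fun (κ : K) _ => sum_apply_inv_of_smul_finset_eq (hs κ κ.prop) v, sum_const,
      card_univ, nsmul_eq_mul, inv_mul_cancel_left₀ hN]

/-- For `∑ i, x i = card ι * d + #R` these are exactly the neighbors of the layer of `x`. -/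
def layerNeighbor (d : ℤ) (R : Finset ι) (i : ι) : ℤ := d + if i ∈ R then 1 else 0

theorem sum_layerNeighbor (d : ℤ) (R : Finset ι) :
    ∑ i, layerNeighbor d R i = Fintype.card ι * d + #R := by
  simp [layerNeighbor, sum_add_distrib]

theorem sum_layerNeighbor_sub_sq_le {d : ℤ} {R : Finset ι} {w : ι → ℤ}
    (hw : ∑ i, w i = Fintype.card ι * d + #R) (c : ℝ) :
    ∑ i, ((layerNeighbor d R i : ℝ) - c) ^ 2 ≤ ∑ i, ((w i : ℝ) - c) ^ 2 := by
  refine sum_sub_sq_le_sum_sub_sq_of_sum_eq (c' := d) ?_ ?_ c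
  · exact_mod_cast (sum_layerNeighbor d R).trans hw.symm
  · have key : ∑ i, (layerNeighbor d R i - d) ^ 2 ≤ ∑ i, (w i - d) ^ 2 := calc
      ∑ i, (layerNeighbor d R i - d) ^ 2 = #R := by simp [layerNeighbor]
      _ = ∑ i, (w i - d) := by simp [sum_sub_distrib, hw]
      _ ≤ ∑ i, (w i - d) ^ 2 := sum_le_sum fun i _ => Int.le_self_sq _
    exact_mod_cast key

section MultiplyTransitive

variable {G : Subgroup (Perm ι)} {m : ℕ} [IsMultiplyPretransitive G ι m]

theorem exists_mem_smul_finset_eq_and_apply_eq (hm : m ≤ Fintype.card ι)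
    (h2m : Fintype.card ι < 2 * m) (π : Perm ι) (A : Finset ι) (j : ι) :
    ∃ g ∈ G, g • A = π • A ∧ g j = π j := by
  obtain ⟨B, hB, hBm⟩ : ∃ B, (B = A ∨ B = Aᶜ) ∧ #B < m := by
    by_cases h : #A < m
    · exact ⟨A, .inl rfl, h⟩
    · exact ⟨Aᶜ, .inr rfl, by rw [card_compl]; omega⟩
  obtain ⟨g, hg, hgπ⟩ :=
    exists_mem_eqOn_of_card_le (G := G) hm π ((card_insert_le j B).trans hBm)
  have hgB : g • B = π • B := by
    simp only [smul_finset_def, Perm.smul_def]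
    exact image_congr fun u hu => hgπ u (mem_insert_of_mem hu)
  refine ⟨g, hg, ?_, hgπ j (mem_insert_self j B)⟩
  rcases hB with rfl | rfl
  · exact hgB
  · rwa [smul_finset_compl, smul_finset_compl, compl_inj_iff] at hgB

theorem exists_mem_smul_finset_eq (hm : m ≤ Fintype.card ι) (h2m : Fintype.card ι < 2 * m)
    {A B : Finset ι} (hAB : #A = #B) : ∃ g ∈ G, g • A = B := by
  have := Set.powersetCard.isPretransitive (α := ι) (n := #A)
  obtain ⟨π, hπ⟩ := exists_smul_eq (Perm ι)
    (⟨A, rfl⟩ : Set.powersetCard ι #A) ⟨B, hAB.symm⟩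
  have : Nonempty ι := Fintype.card_pos_iff.1 (by omega)
  obtain ⟨g, hg, hgA, -⟩ :=
    exists_mem_smul_finset_eq_and_apply_eq (G := G) hm h2m π A (Classical.arbitrary ι)
  exact ⟨g, hg, hgA.trans congr(Subtype.val $hπ)⟩

theorem exists_mem_smul_finset_eq_self_and_apply_eq (hm : m ≤ Fintype.card ι)
    (h2m : Fintype.card ι < 2 * m) (s : Finset ι) {i j : ι} (hij : i ∈ s ↔ j ∈ s) :
    ∃ g ∈ G, g • s = s ∧ g j = i := by
  obtain ⟨g, hg, hgs, hgj⟩ :=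
    exists_mem_smul_finset_eq_and_apply_eq (G := G) hm h2m (swap i j) s j
  refine ⟨g, hg, hgs.trans ?_, hgj.trans (swap_apply_right i j)⟩
  ext u
  rw [← inv_smul_mem_iff, swap_inv, Perm.smul_def, swap_apply_def]
  split_ifs <;> simp_all

theorem Convex.blockAverage_mem {X : Set (ι → ℝ)} (hX : Convex ℝ X)
    (hXG : ∀ g ∈ G, ∀ v ∈ X, (fun i => v (g⁻¹ i)) ∈ X) (hm : m ≤ Fintype.card ι)
    (h2m : Fintype.card ι < 2 * m) (R : Finset ι) {v : ι → ℝ} (hv : v ∈ X) :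
    (fun i => if i ∈ R then (∑ j ∈ R, v j) / #R else (∑ j ∈ Rᶜ, v j) / #Rᶜ) ∈ X := by
  set K := G ⊓ stabilizer (Perm ι) R
  obtain ⟨z, hzX, hz, hzsum⟩ := hX.exists_mem_invariant K
    (fun κ hκ => hXG κ (Subgroup.mem_inf.1 hκ).1) hv
  have hKR : ∀ κ ∈ K, κ • R = R := fun κ hκ => (Subgroup.mem_inf.1 hκ).2
  have hblock : ∀ s : Finset ι, (∀ κ ∈ K, κ • s = s) → (∀ i ∈ s, ∀ j ∈ s, i ∈ R ↔ j ∈ R) →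
      ∀ i ∈ s, z i = (∑ j ∈ s, v j) / #s := by
    intro s hKs hsR i hi
    have hzi : ∀ j ∈ s, z j = z i := fun j hj => by
      obtain ⟨g, hg, hgR, hgj⟩ :=
        exists_mem_smul_finset_eq_self_and_apply_eq (G := G) hm h2m R (hsR i hi j hj)
      rw [← hgj, hz g (Subgroup.mem_inf.2 ⟨hg, hgR⟩)]
    have hs : (#s : ℝ) ≠ 0 := Nat.cast_ne_zero.2 (card_ne_zero_of_mem hi)
    rw [← hzsum s hKs, sum_congr rfl hzi, sum_const, nsmul_eq_mul, mul_div_cancel_left₀ _ hs]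
  convert hzX using 1
  funext i
  split_ifs with hi
  · exact (hblock R hKR (fun i hi j hj => iff_of_true hi hj) i hi).symm
  · refine (hblock Rᶜ (fun κ hκ => by rw [smul_finset_compl, hKR κ hκ])
      (fun i hi j hj => iff_of_false (mem_compl.1 hi) (mem_compl.1 hj)) i (mem_compl.2 hi)).symm

theorem exists_mem_sum_eq_card_mul {X : Set (ι → ℝ)} (hX : Convex ℝ X)
    (hXG : ∀ g ∈ G, ∀ v ∈ X, (fun i => v (g⁻¹ i)) ∈ X) (hm : m ≤ Fintype.card ι)
    (h2m : Fintype.card ι < 2 * m) {x : ι → ℤ} (hx : (fun i => (x i : ℝ)) ∈ X) {d : ℤ}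
    {R : Finset ι} (hxR : ∑ i, x i = Fintype.card ι * d + #R) :
    ∃ v ∈ X, ∑ i ∈ R, v i = #R * (d + 1) ∧ ∑ i, v i = ∑ i, x i := by
  obtain ⟨S₁, hS₁, h₁⟩ := exists_card_eq_min_le_sum (fun i => d - x i) (card_le_univ R)
  obtain ⟨S₂, hS₂, h₂⟩ := exists_card_eq_min_le_sum (fun i => x i - d) (card_le_univ R)
  simp only [sum_sub_distrib, sum_const, card_univ, hS₁, hS₂, hxR, nsmul_eq_mul] at h₁ h₂
  have hR : (0 : ℤ) ≤ #R := Nat.cast_nonneg _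
  have hS₁R : ∑ i ∈ S₁, x i ≤ #R * (d + 1) := by
    rcases min_le_iff.1 h₁ with h | h <;> linarith
  have hS₂R : #R * (d + 1) ≤ ∑ i ∈ S₂, x i := by
    rcases min_le_iff.1 h₂ with h | h <;> linarith
  obtain ⟨g₁, hg₁, hg₁S⟩ := exists_mem_smul_finset_eq (G := G) hm h2m hS₁
  obtain ⟨g₂, hg₂, hg₂S⟩ := exists_mem_smul_finset_eq (G := G) hm h2m hS₂
  let sumOn (s : Finset ι) : (ι → ℝ) →ₗ[ℝ] ℝ := ∑ i ∈ s, LinearMap.proj i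
  have sumOn_apply (s : Finset ι) (v : ι → ℝ) : sumOn s v = ∑ i ∈ s, v i := by simp [sumOn]
  have hsum (g : Perm ι) (A B : Finset ι) (h : g • A = B) :
      sumOn B (fun i => (x (g⁻¹ i) : ℝ)) = ∑ i ∈ A, x i := by
    rw [sumOn_apply, sum_apply_inv_of_smul_finset_eq h (fun i => (x i : ℝ)), Int.cast_sum]
  obtain ⟨v, hv, hvR⟩ := exists_mem_segment_apply_eq (sumOn R)
    (a := fun i => (x (g₁⁻¹ i) : ℝ)) (b := fun i => (x (g₂⁻¹ i) : ℝ)) (c := #R * (d + 1))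
    (by rw [hsum g₁ S₁ R hg₁S]; exact_mod_cast hS₁R)
    (by rw [hsum g₂ S₂ R hg₂S]; exact_mod_cast hS₂R)
  refine ⟨v, hX.segment_subset (hXG g₁ hg₁ _ hx) (hXG g₂ hg₂ _ hx) hv, by rwa [← sumOn_apply], ?_⟩
  have huniv (g : Perm ι) : g • (univ : Finset ι) = univ := smul_finset_univ
  rw [← sumOn_apply, apply_eq_of_mem_segment _ ((hsum _ _ _ (huniv g₁)).trans
    (hsum _ _ _ (huniv g₂)).symm) hv, hsum _ _ _ (huniv g₁), Int.cast_sum]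

theorem layerNeighbor_mem {X : Set (ι → ℝ)} (hX : Convex ℝ X)
    (hXG : ∀ g ∈ G, ∀ v ∈ X, (fun i => v (g⁻¹ i)) ∈ X) (hm : m ≤ Fintype.card ι)
    (h2m : Fintype.card ι < 2 * m) {x : ι → ℤ} (hx : (fun i => (x i : ℝ)) ∈ X) {d : ℤ}
    {R : Finset ι} (hxR : ∑ i, x i = Fintype.card ι * d + #R) :
    (fun i => (layerNeighbor d R i : ℝ)) ∈ X := by
  obtain ⟨v, hv, hvR, hvU⟩ := exists_mem_sum_eq_card_mul hX hXG hm h2m hx hxR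
  have hvRc : ∑ i ∈ Rᶜ, v i = #Rᶜ * d := by
    have hsplit := sum_add_sum_compl R v
    rw [hvU, hvR] at hsplit
    rw [card_compl, Nat.cast_sub (card_le_univ R)]
    push_cast [hxR] at hsplit
    linarith
  convert hX.blockAverage_mem hXG hm h2m R hv using 1
  funext i
  by_cases hi : i ∈ R
  · have hR : (#R : ℝ) ≠ 0 := Nat.cast_ne_zero.2 (card_ne_zero_of_mem hi)
    simp [layerNeighbor, hi, hvR, mul_div_cancel_left₀ _ hR]
  · have hRc : (#Rᶜ : ℝ) ≠ 0 := Nat.cast_ne_zero.2 (card_ne_zero_of_mem (mem_compl.2 hi))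
    simp [layerNeighbor, hi, hvRc, mul_div_cancel_left₀ _ hRc]

end MultiplyTransitive

theorem closer_feasible_integer_point_general (n : ℕ)
    (X : Set (Fin n → ℝ)) (hX : Convex ℝ X) (G : Subgroup (Equiv.Perm (Fin n)))
    (hinv : ∀ g ∈ G, (fun x : Fin n → ℝ => fun i => x (g⁻¹ i)) '' X = X)
    (htrans : ∀ f₁ f₂ : Fin (n / 2 + 1) → Fin n,
      Function.Injective f₁ → Function.Injective f₂ →
      ∃ g ∈ G, ∀ j, g (f₁ j) = f₂ j)
    (x : Fin n → ℤ) (hxX : (fun i => (x i : ℝ)) ∈ X) (k : ℤ) (hk : ∑ i, x i = k)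
    (hnotnb : ¬ ∀ y : Fin n → ℤ, ∑ i, y i = k →
      ∑ i, ((x i : ℝ) - (k : ℝ) / n) ^ 2 ≤ ∑ i, ((y i : ℝ) - (k : ℝ) / n) ^ 2) :
    ∃ y : Fin n → ℤ, (fun i => (y i : ℝ)) ∈ X ∧ ∑ i, y i = k ∧
      ∑ i, ((y i : ℝ) - (k : ℝ) / n) ^ 2 < ∑ i, ((x i : ℝ) - (k : ℝ) / n) ^ 2 := by
  push Not at hnotnb
  obtain ⟨w, hw, hwx⟩ := hnotnb
  have hn : n ≠ 0 := by
    rintro rfl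
    simp at hwx
  have hXG : ∀ g ∈ G, ∀ v ∈ X, (fun i => v (g⁻¹ i)) ∈ X :=
    fun g hg v hv => hinv g hg ▸ ⟨v, hv, rfl⟩
  have : IsMultiplyPretransitive G (Fin n) (n / 2 + 1) := ⟨fun f₁ f₂ => by
    obtain ⟨g, hg, hgf⟩ := htrans f₁ f₂ f₁.injective f₂.injective
    exact ⟨⟨g, hg⟩, Embedding.ext fun j => by
      simpa [Subgroup.smul_def, Perm.smul_def] using hgf j⟩⟩
  have hr : 0 ≤ k % n := Int.emod_nonneg k (by omega)
  obtain ⟨R, -, hR⟩ := exists_subset_card_eq (s := (univ : Finset (Fin n))) (n := (k % n).toNat)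
    (by have := Int.emod_lt_of_pos k (by omega : (0 : ℤ) < n); simp; omega)
  have hkR : k = Fintype.card (Fin n) * (k / n) + #R := by
    rw [hR, Fintype.card_fin, Int.toNat_of_nonneg hr, Int.mul_ediv_add_emod]
  refine ⟨layerNeighbor (k / n) R, layerNeighbor_mem (m := n / 2 + 1) hX hXG (by simp; omega)
    (by simp; omega) hxX (hk.trans hkR), (sum_layerNeighbor _ _).trans hkR.symm, ?_⟩
  exact (sum_layerNeighbor_sub_sq_le (hw.trans hkR) _).trans_lt hwx

/-- Let `n ≥ 2`, `X ⊆ ℝⁿ` convex and invariant under a group `G` acting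
`(⌊n/2⌋+1)`-transitively on the coordinates. If `x ∈ X ∩ ℤⁿ` has coordinate sum `k`
and is not a neighbor of the `k`-th layer, then there is an integer point `y ∈ X` on the
same layer strictly closer to the center `m_k = (k/n,…,k/n)`. -/
theorem closer_feasible_integer_point (n : ℕ) (hn : 2 ≤ n)
    (X : Set (Fin n → ℝ)) (hX : Convex ℝ X) (G : Subgroup (Equiv.Perm (Fin n)))
    (hinv : ∀ g ∈ G, (fun x : Fin n → ℝ => fun i => x (g⁻¹ i)) '' X = X)
    (htrans : ∀ f₁ f₂ : Fin (n / 2 + 1) → Fin n,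
      Function.Injective f₁ → Function.Injective f₂ →
      ∃ g ∈ G, ∀ j, g (f₁ j) = f₂ j)
    (x : Fin n → ℤ) (hxX : (fun i => (x i : ℝ)) ∈ X) (k : ℤ) (hk : ∑ i, x i = k)
    (hnotnb : ¬ ∀ y : Fin n → ℤ, ∑ i, y i = k →
      ∑ i, ((x i : ℝ) - (k : ℝ) / n) ^ 2 ≤ ∑ i, ((y i : ℝ) - (k : ℝ) / n) ^ 2) :
    ∃ y : Fin n → ℤ, (fun i => (y i : ℝ)) ∈ X ∧ ∑ i, y i = k ∧
      ∑ i, ((y i : ℝ) - (k : ℝ) / n) ^ 2 < ∑ i, ((x i : ℝ) - (k : ℝ) / n) ^ 2 :=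
  closer_feasible_integer_point_general n X hX G hinv htrans x hxX k hk hnotnb
end

section
/- Let n ≥ 2, let X ⊆ ℝⁿ be convex, and let G ≤ S_n act (⌊n/2⌋+1)-transitively on the coordinate indices {1,…,n} with X^g = X for all g ∈ G. Then for every k ∈ ℤ, the k-th layer contains a point of X ∩ ℤⁿ if and only if some neighbor N ∈ 𝒩_k of the k-th layer lies in X. -/
/-!
Among the integer points of `X` on the layer take one, `z`, with least `∑ zᵢ²`. If two of its
coordinates differ by at least `2`, we find `g ∈ G` and `m ≥ 2` dividing every entry of
`z ∘ g - z`. Since `z ∘ g ∈ X` has the same coordinate sum and the same norm as `z`, the point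
`z + (z ∘ g - z) / m` of the segment `[z, z ∘ g]` is an integer point of `X` on the layer with
smaller norm. If two coordinates of `z` have equal parity but different values, `g` can be taken
to preserve parities and move one onto the other (the smaller parity class has at most `⌊n/2⌋`
points, so with one more point it is within reach of the transitivity), and `m = 2`. Otherwise `z`
takes only two values `a`, `b`, and `m = |a - b|` works for any `g` that moves a coordinate with
one value to one with the other. Hence the minimizer has all its coordinates in some `{d, d + 1}`,
and such a vector is closest to the center among the integer points of the layer.
-/

open Finset MulAction

section

variable {ι : Type*} {X : Set (ι → ℝ)}

theorem Convex.intCast_add_mem_of_intCast_add_mul_mem (hX : Convex ℝ X)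
    {z q : ι → ℤ} {m : ℤ} (hm : 1 ≤ m) (hz : (fun i => (z i : ℝ)) ∈ X)
    (hz' : (fun i => ((z i + m * q i : ℤ) : ℝ)) ∈ X) :
    (fun i => ((z i + q i : ℤ) : ℝ)) ∈ X := by
  have hm' : (1 : ℝ) ≤ m := by exact_mod_cast hm
  convert hX.add_smul_sub_mem hz hz' ⟨by positivity, inv_le_one_of_one_le₀ hm'⟩ using 1
  ext i
  simp only [Pi.add_apply, Pi.smul_apply, Pi.sub_apply, smul_eq_mul]
  push_cast
  field_simp
  ring

variable [Fintype ι]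

theorem sum_sq_add_lt_of_sum_sq_add_mul_eq {z q : ι → ℤ} {m : ℤ} (hm : 2 ≤ m) (hq : q ≠ 0)
    (hsq : ∑ i, (z i + m * q i) ^ 2 = ∑ i, z i ^ 2) :
    ∑ i, (z i + q i) ^ 2 < ∑ i, z i ^ 2 := by
  obtain ⟨j, hj⟩ := Function.ne_iff.mp hq
  have hpos : 0 < ∑ i, q i ^ 2 :=
    (pow_two_pos_of_ne_zero hj).trans_le (single_le_sum (fun i _ => sq_nonneg (q i)) (mem_univ j))
  have expand : ∀ c : ℤ, ∑ i, (z i + c * q i) ^ 2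
      = ∑ i, z i ^ 2 + c * (2 * ∑ i, z i * q i) + c ^ 2 * ∑ i, q i ^ 2 := by
    intro c
    simp only [mul_sum, ← sum_add_distrib]
    exact sum_congr rfl fun i _ => by ring
  have hcross : 2 * ∑ i, z i * q i + m * ∑ i, q i ^ 2 = 0 :=
    (mul_eq_zero.mp (show m * (2 * ∑ i, z i * q i + m * ∑ i, q i ^ 2) = 0 by
      linear_combination hsq - expand m)).resolve_left (by omega)
  have h1 := expand 1
  simp only [one_mul, one_pow] at h1
  nlinarith

theorem Convex.exists_intCast_mem_sum_sq_lt_of_dvd_sub (hX : Convex ℝ X) {z z' : ι → ℤ} {m : ℤ}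
    (hm : 2 ≤ m) (hne : z' ≠ z) (hdvd : ∀ i, m ∣ z' i - z i)
    (hz : (fun i => (z i : ℝ)) ∈ X) (hz' : (fun i => (z' i : ℝ)) ∈ X)
    (hsum : ∑ i, z' i = ∑ i, z i) (hsq : ∑ i, z' i ^ 2 = ∑ i, z i ^ 2) :
    ∃ w : ι → ℤ, (fun i => (w i : ℝ)) ∈ X ∧ ∑ i, w i = ∑ i, z i ∧
      ∑ i, w i ^ 2 < ∑ i, z i ^ 2 := by
  choose q hq using hdvd
  have hz'_eq : z' = fun i => z i + m * q i := funext fun i => by linarith [hq i]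
  subst hz'_eq
  have hq0 : q ≠ 0 := fun h => hne (funext fun i => by simp [h])
  have hqsum : ∑ i, q i = 0 := by
    rw [sum_add_distrib, ← mul_sum, add_eq_left, mul_eq_zero_iff_left (by omega)] at hsum
    exact hsum
  refine ⟨fun i => z i + q i, hX.intCast_add_mem_of_intCast_add_mul_mem (by omega) hz hz', ?_,
    sum_sq_add_lt_of_sum_sq_add_mul_eq hm hq0 hsq⟩
  rw [sum_add_distrib, hqsum, add_zero]

theorem sum_sq_le_of_forall_le_add_one {N y : ι → ℤ}
    (hN : ∀ i j, N j ≤ N i + 1) (hsum : ∑ i, y i = ∑ i, N i) :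
    ∑ i, N i ^ 2 ≤ ∑ i, y i ^ 2 := by
  rcases isEmpty_or_nonempty ι with hι | hι
  · simp
  obtain ⟨i₀, -, hi₀⟩ := exists_min_image univ N univ_nonempty
  set d := N i₀
  -- `t ↦ t ^ 2` lies above its chord through `d` and `d + 1`, on which `N` takes its values.
  have hchord : ∀ i, N i ^ 2 + (2 * d + 1) * (y i - N i) ≤ y i ^ 2 := by
    intro i
    have hNi : N i = d ∨ N i = d + 1 := by have := hi₀ i (mem_univ i); have := hN i₀ i; omega
    have hyi : y i ≤ d ∨ d + 1 ≤ y i := by omega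
    rcases hNi with h | h <;> rcases hyi with h' | h' <;> rw [h] <;> nlinarith
  calc ∑ i, N i ^ 2 = ∑ i, (N i ^ 2 + (2 * d + 1) * (y i - N i)) := by
        rw [sum_add_distrib, ← mul_sum, sum_sub_distrib, hsum, sub_self, mul_zero, add_zero]
    _ ≤ ∑ i, y i ^ 2 := sum_le_sum fun i _ => hchord i

theorem sum_sub_sq_le_of_sum_sq_le {x y : ι → ℝ} (c : ℝ)
    (hsum : ∑ i, x i = ∑ i, y i) (hsq : ∑ i, x i ^ 2 ≤ ∑ i, y i ^ 2) :
    ∑ i, (x i - c) ^ 2 ≤ ∑ i, (y i - c) ^ 2 := by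
  simp only [sub_sq, sum_add_distrib, sum_sub_distrib, ← sum_mul, ← mul_sum, hsum]
  linarith

end

section

variable {α : Type*} [Fintype α] {G : Type*} [Group G] [MulAction G α] {k : ℕ}
  [IsMultiplyPretransitive G α k]

theorem exists_smul_eq_on_of_card_le (hk : k ≤ Fintype.card α) (R : Finset α) (hR : #R ≤ k)
    (σ : Equiv.Perm α) : ∃ g : G, ∀ x ∈ R, g • x = σ x := by
  have := isMultiplyPretransitive_of_le (G := G) (α := α) hR (by rwa [Nat.card_eq_fintype_card])
  let u : Fin #R ↪ α := R.equivFin.symm.toEmbedding.trans (Function.Embedding.subtype _)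
  obtain ⟨g, hg⟩ := exists_smul_eq G u (u.trans σ.toEmbedding)
  refine ⟨g, fun x hx => ?_⟩
  simpa [u] using DFunLike.congr_fun hg (R.equivFin ⟨x, hx⟩)

variable [DecidableEq α]

theorem exists_smul_eq_and_smul_mem_iff (hk : k ≤ Fintype.card α)
    (hk2 : Fintype.card α < 2 * k) (S : Finset α) {a b : α} (hab : a ∈ S ↔ b ∈ S) :
    ∃ g : G, g • a = b ∧ ∀ x, g • x ∈ S ↔ x ∈ S := by
  wlog hS : 2 * #S ≤ Fintype.card α generalizing S
  · obtain ⟨g, hga, hg⟩ := this Sᶜ (by simpa using hab.not) (by rw [card_compl]; omega)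
    exact ⟨g, hga, fun x => by simpa using (hg x).not⟩
  obtain ⟨g, hg⟩ := exists_smul_eq_on_of_card_le (G := G) hk (insert a S)
    ((card_insert_le a S).trans (by omega)) (Equiv.swap a b)
  have hmaps : ∀ x ∈ S, g • x ∈ S := by
    intro x hx
    rw [hg x (mem_insert_of_mem hx), Equiv.swap_apply_def]
    split_ifs with hxa hxb
    · exact hab.mp (hxa ▸ hx)
    · exact hab.mpr (hxb ▸ hx)
    · exact hx
  have himage : S.image (g • ·) = S :=
    eq_of_subset_of_card_le (image_subset_iff.mpr hmaps)
      (card_image_of_injective _ (MulAction.injective g)).ge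
  refine ⟨g, by simpa using hg a (mem_insert_self a S), fun x => ⟨fun hx => ?_, hmaps x⟩⟩
  obtain ⟨y, hy, hyx⟩ := mem_image.mp (himage.symm ▸ hx)
  rwa [← MulAction.injective g hyx]

variable {X : Set (α → ℝ)}

theorem exists_intCast_mem_sum_sq_lt_of_add_two_le (hk : k ≤ Fintype.card α)
    (hk2 : Fintype.card α < 2 * k) (hX : Convex ℝ X)
    (hXG : ∀ g : G, ∀ x ∈ X, (fun a => x (g • a)) ∈ X) {z : α → ℤ}
    (hz : (fun a => (z a : ℝ)) ∈ X) {a b : α} (hab : z a + 2 ≤ z b) :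
    ∃ w : α → ℤ, (fun a => (w a : ℝ)) ∈ X ∧ ∑ a, w a = ∑ a, z a ∧
      ∑ a, w a ^ 2 < ∑ a, z a ^ 2 := by
  suffices ∃ g : G, ∃ m : ℤ, 2 ≤ m ∧ (fun x => z (g • x)) ≠ z ∧ ∀ x, m ∣ z (g • x) - z x by
    obtain ⟨g, m, hm, hne, hdvd⟩ := this
    exact hX.exists_intCast_mem_sum_sq_lt_of_dvd_sub hm hne hdvd hz (hXG g _ hz)
      (Equiv.sum_comp (MulAction.toPerm g) z)
      (Equiv.sum_comp (MulAction.toPerm g) fun x => z x ^ 2)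
  by_cases hpar : ∃ i j, (Even (z i) ↔ Even (z j)) ∧ z i ≠ z j
  · obtain ⟨i, j, hij, hne⟩ := hpar
    obtain ⟨g, hgi, hg⟩ := exists_smul_eq_and_smul_mem_iff (G := G) hk hk2
      (univ.filter fun x => Even (z x)) (a := i) (b := j) (by simpa using hij)
    refine ⟨g, 2, le_rfl, fun h => hne ?_, fun x => ?_⟩
    · rw [← hgi]
      exact (congrFun h i).symm
    · exact (Int.even_sub.mpr (by simpa using hg x)).two_dvd
  · push Not at hpar
    have hab' : ¬(Even (z a) ↔ Even (z b)) := fun h => by linarith [hpar a b h]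
    have hvals : ∀ x, z x = z a ∨ z x = z b := by
      intro x
      by_cases hx : Even (z x) ↔ Even (z a)
      · exact Or.inl (hpar x a hx)
      · exact Or.inr (hpar x b (by tauto))
    obtain ⟨g, hg⟩ := exists_smul_eq_on_of_card_le (G := G) hk {a} (by rw [card_singleton]; omega)
      (Equiv.swap a b)
    have hga : g • a = b := by simpa using hg a (mem_singleton_self a)
    refine ⟨g, z b - z a, by omega, fun h => ?_, fun x => ?_⟩
    · have := congrFun h a
      rw [hga] at this
      omega
    · rcases hvals (g • x) with h₁ | h₁ <;> rcases hvals x with h₂ | h₂ <;>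
        simp [h₁, h₂, dvd_sub_comm (b := z a)]

theorem exists_intCast_mem_forall_le_add_one (hk : k ≤ Fintype.card α)
    (hk2 : Fintype.card α < 2 * k) (hX : Convex ℝ X)
    (hXG : ∀ g : G, ∀ x ∈ X, (fun a => x (g • a)) ∈ X) {x : α → ℤ}
    (hx : (fun a => (x a : ℝ)) ∈ X) :
    ∃ N : α → ℤ, (fun a => (N a : ℝ)) ∈ X ∧ ∑ a, N a = ∑ a, x a ∧ ∀ a b, N b ≤ N a + 1 := by
  obtain ⟨N, ⟨hNX, hNsum⟩, hmin⟩ := (measure fun z : α → ℤ => (∑ a, z a ^ 2).toNat).wf.has_min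
    {z | (fun a => (z a : ℝ)) ∈ X ∧ ∑ a, z a = ∑ a, x a} ⟨x, hx, rfl⟩
  refine ⟨N, hNX, hNsum, fun a b => ?_⟩
  by_contra! hab
  obtain ⟨w, hwX, hwsum, hwlt⟩ :=
    exists_intCast_mem_sum_sq_lt_of_add_two_le hk hk2 hX hXG hNX (a := a) (b := b) (by omega)
  have hw0 : 0 ≤ ∑ a, w a ^ 2 := sum_nonneg fun a _ => sq_nonneg (w a)
  exact hmin w ⟨hwX, hwsum.trans hNsum⟩ (show (∑ a, w a ^ 2).toNat < (∑ a, N a ^ 2).toNat by omega)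

end

theorem isMultiplyPretransitive_of_forall_injective {α : Type*} {m : ℕ}
    {G : Subgroup (Equiv.Perm α)}
    (h : ∀ f₁ f₂ : Fin m → α, Function.Injective f₁ → Function.Injective f₂ →
      ∃ g ∈ G, ∀ j, g (f₁ j) = f₂ j) :
    IsMultiplyPretransitive G α m where
  exists_smul_eq u v := by
    obtain ⟨g, hg, hguv⟩ := h u v u.injective v.injective
    exact ⟨⟨g, hg⟩, Function.Embedding.ext hguv⟩

theorem comp_smul_mem_of_image_eq {α : Type*} {G : Subgroup (Equiv.Perm α)} {X : Set (α → ℝ)}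
    (hinv : ∀ g ∈ G, (fun x : α → ℝ => fun i => x (g⁻¹ i)) '' X = X) (g : G) {x : α → ℝ}
    (hx : x ∈ X) : (fun a => x (g • a)) ∈ X := by
  rw [← hinv _ (inv_mem g.2)]
  exact ⟨x, hx, by simp [Subgroup.smul_def, Equiv.Perm.smul_def]⟩

/-- Let `n ≥ 2`, `X ⊆ ℝⁿ` convex and invariant under a group `G` acting
`(⌊n/2⌋+1)`-transitively on the coordinates. Then for every `k ∈ ℤ`, the `k`-th layer
contains a point of `X ∩ ℤⁿ` iff some neighbor of the `k`-th layer lies in `X`. -/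
theorem layer_feasible_iff_neighbor_feasible (n : ℕ) (hn : 2 ≤ n)
    (X : Set (Fin n → ℝ)) (hX : Convex ℝ X) (G : Subgroup (Equiv.Perm (Fin n)))
    (hinv : ∀ g ∈ G, (fun x : Fin n → ℝ => fun i => x (g⁻¹ i)) '' X = X)
    (htrans : ∀ f₁ f₂ : Fin (n / 2 + 1) → Fin n,
      Function.Injective f₁ → Function.Injective f₂ →
      ∃ g ∈ G, ∀ j, g (f₁ j) = f₂ j) :
    ∀ k : ℤ,
      (∃ x : Fin n → ℤ, (fun i => (x i : ℝ)) ∈ X ∧ ∑ i, x i = k) ↔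
      (∃ N : Fin n → ℤ, (∑ i, N i = k ∧
          ∀ y : Fin n → ℤ, ∑ i, y i = k →
            ∑ i, ((N i : ℝ) - (k : ℝ) / n) ^ 2 ≤ ∑ i, ((y i : ℝ) - (k : ℝ) / n) ^ 2) ∧
        (fun i => (N i : ℝ)) ∈ X) := by
  intro k
  have := isMultiplyPretransitive_of_forall_injective htrans
  constructor
  · rintro ⟨x, hx, rfl⟩
    obtain ⟨N, hNX, hNsum, hN⟩ := exists_intCast_mem_forall_le_add_one (G := G) (k := n / 2 + 1)
      (by rw [Fintype.card_fin]; omega) (by rw [Fintype.card_fin]; omega) hX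
      (fun g _ => comp_smul_mem_of_image_eq hinv g) hx
    refine ⟨N, ⟨hNsum, fun y hy => sum_sub_sq_le_of_sum_sq_le _ ?_ ?_⟩, hNX⟩
    · exact_mod_cast hNsum.trans hy.symm
    · exact_mod_cast sum_sq_le_of_forall_le_add_one hN (hy.trans hNsum.symm)
  · rintro ⟨N, ⟨hNsum, -⟩, hNX⟩
    exact ⟨N, hNX, hNsum⟩
end

section
/- Let G ≤ S_n act k-homogeneously on {1,…,n}, where k ∈ {1,…,⌊n/2⌋}. Then for every d ∈ ℤ and every r ∈ {0,…,k} ∪ {n−k,…,n−1}, the group G acts transitively on the set of neighbors 𝒩_{r+nd}: for any two neighbors N, N' ∈ 𝒩_{r+nd} there exists g ∈ G with N^g = N'. -/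
/-!
Sets of size `r` are the supports `{i | N i = d + 1}` of the neighbors in `𝒩_{r+nd}`, so it
suffices to show that `G` is `r`-homogeneous; for `r ≥ n - k` pass to complements, so let
`r ≤ k ≤ n / 2`. This is the Livingstone–Wagner argument in its linear-algebra form. The up
operator `U f K = ∑_{i ∈ K} f (K \ {i})` and the down operator `D` are adjoint and satisfy
`D U - U D = n - 2 |S|`, whence `‖U f‖² = ‖D f‖² + (n - 2j) ‖f‖²` for `f` supported on
`j`-sets: `U` is injective there as long as `2j < n`. It commutes with `G` and multiplies the
total sum by `n - j`. If `G` is `(j + 1)`-homogeneous, a `G`-invariant function on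
`(j + 1)`-sets with sum zero vanishes, hence so does every `G`-invariant function on `j`-sets
with sum zero; applied to `#L • 1_O - #O • 1_L` for an orbit `O` inside the level `L` of
`j`-sets, this forces `O = L`.
-/

open Finset

variable {α : Type*} [DecidableEq α] {R : Type*} [CommRing R]

def upOp (f : Finset α → R) (K : Finset α) : R := ∑ i ∈ K, f (K.erase i)

theorem upOp_eq_zero_of_card_ne {f : Finset α → R} {j : ℕ} (hf : ∀ S, #S ≠ j → f S = 0)
    {K : Finset α} (hK : #K ≠ j + 1) : upOp f K = 0 :=
  sum_eq_zero fun i hi => hf _ fun h => hK (by rw [← card_erase_add_one hi, h])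

theorem upOp_image {f : Finset α → R} (g : Equiv.Perm α) (hf : ∀ S, f (S.image g) = f S)
    (K : Finset α) : upOp f (K.image g) = upOp f K := by
  rw [upOp, sum_image fun a _ b _ h => g.injective h]
  exact sum_congr rfl fun i _ => by rw [← image_erase g.injective, hf]

variable [Fintype α]

def downOp (f : Finset α → R) (S : Finset α) : R := ∑ i ∈ Sᶜ, f (insert i S)

theorem sum_upOp_mul (f g : Finset α → R) :
    ∑ K, upOp f K * g K = ∑ S, f S * downOp g S := by
  simp only [upOp, downOp, sum_mul, mul_sum]
  rw [sum_sigma', sum_sigma']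
  refine sum_nbij' (fun p => ⟨p.1.erase p.2, p.2⟩) (fun p => ⟨insert p.2 p.1, p.2⟩)
    ?_ ?_ ?_ ?_ ?_ <;> rintro ⟨S, i⟩ h <;> simp_all [insert_erase]

theorem sum_upOp (f : Finset α → R) :
    ∑ K, upOp f K = ∑ S, (Fintype.card α - #S : R) * f S := by
  simpa [downOp, card_compl, Nat.cast_sub (card_le_univ _), mul_comm]
    using sum_upOp_mul f (fun _ => 1)

theorem downOp_upOp (f : Finset α → R) (S : Finset α) :
    downOp (upOp f) S = upOp (downOp f) S + (Fintype.card α - 2 * #S : R) * f S := by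
  have hDU : downOp (upOp f) S
      = (Fintype.card α - #S : R) * f S + ∑ i ∈ Sᶜ, ∑ j ∈ S, f (insert i (S.erase j)) := by
    have h : ∀ i ∈ Sᶜ, upOp f (insert i S) = f S + ∑ j ∈ S, f (insert i (S.erase j)) := by
      intro i hi
      rw [mem_compl] at hi
      rw [upOp, sum_insert hi, erase_insert hi]
      congr 1
      refine sum_congr rfl fun j hj => ?_
      rw [erase_insert_of_ne (ne_of_mem_of_not_mem hj hi).symm]
    rw [downOp, sum_congr rfl h, sum_add_distrib, sum_const, nsmul_eq_mul, card_compl,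
      Nat.cast_sub (card_le_univ S)]
  have hUD : upOp (downOp f) S
      = (#S : R) * f S + ∑ j ∈ S, ∑ i ∈ Sᶜ, f (insert i (S.erase j)) := by
    have h : ∀ j ∈ S, downOp f (S.erase j) = f S + ∑ i ∈ Sᶜ, f (insert i (S.erase j)) := by
      intro j hj
      rw [downOp, compl_erase, sum_insert (by simp [hj]), insert_erase hj]
    rw [upOp, sum_congr rfl h, sum_add_distrib, sum_const, nsmul_eq_mul]
  rw [hDU, hUD, sum_comm]
  ring

theorem eq_zero_of_upOp_eq_zero [LinearOrder R] [IsStrictOrderedRing R] {f : Finset α → R}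
    {j : ℕ} (hj : 2 * j < Fintype.card α) (hf : ∀ S, #S ≠ j → f S = 0) (hU : upOp f = 0) :
    f = 0 := by
  have hDU : ∀ S, f S * downOp (upOp f) S
      = f S * upOp (downOp f) S + (Fintype.card α - 2 * j : R) * (f S * f S) := by
    intro S
    by_cases hS : #S = j
    · rw [downOp_upOp, hS]; ring
    · simp [hf S hS]
  have hnorm :
      ∑ S, downOp f S * downOp f S + (Fintype.card α - 2 * j : R) * ∑ S, f S * f S = 0 :=
    calc _ = ∑ S, f S * downOp (upOp f) S := by
          simp only [hDU, sum_add_distrib, ← mul_sum, ← sum_upOp_mul, mul_comm (f _)]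
      _ = ∑ K, upOp f K * upOp f K := (sum_upOp_mul _ _).symm
      _ = 0 := by simp [hU]
  have hpos : (0 : R) < Fintype.card α - 2 * j := sub_pos.mpr (by exact_mod_cast hj)
  have hsq : ∑ S, f S * f S = 0 := by
    have := sum_nonneg fun S (_ : S ∈ univ) => mul_self_nonneg (downOp f S)
    have := sum_nonneg fun S (_ : S ∈ univ) => mul_self_nonneg (f S)
    nlinarith
  funext S
  exact mul_self_eq_zero.mp
    ((sum_eq_zero_iff_of_nonneg fun S _ => mul_self_nonneg (f S)).mp hsq S (mem_univ S))

theorem Finset.image_perm_compl (g : Equiv.Perm α) (S : Finset α) :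
    Sᶜ.image g = (S.image g)ᶜ := by
  apply coe_injective
  push_cast
  exact g.image_compl S

namespace Equiv.Perm

def IsHomogeneous (G : Subgroup (Perm α)) (k : ℕ) : Prop :=
  ∀ S T : Finset α, #S = k → #T = k → ∃ g ∈ G, S.image g = T

variable {G : Subgroup (Perm α)}

theorem IsHomogeneous.eq_zero_of_sum_eq_zero [IsDomain R] [CharZero R] {k : ℕ}
    (hG : IsHomogeneous G k) {f : Finset α → R} (hf : ∀ S, #S ≠ k → f S = 0)
    (hinv : ∀ g ∈ G, ∀ S, f (S.image g) = f S) (hsum : ∑ S, f S = 0) : f = 0 := by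
  funext K
  by_cases hK : #K = k
  · have hconst : ∀ S ∈ powersetCard k univ, f S = f K := by
      intro S hS
      obtain ⟨g, hg, rfl⟩ := hG K S hK (mem_powersetCard_univ.mp hS)
      exact hinv g hg K
    rw [← sum_subset (subset_univ _) fun S _ hS => hf S (mt mem_powersetCard_univ.mpr hS),
      sum_congr rfl hconst, sum_const, nsmul_eq_mul] at hsum
    have hne : (#(powersetCard k univ) : R) ≠ 0 :=
      Nat.cast_ne_zero.mpr (card_ne_zero.mpr ⟨K, mem_powersetCard_univ.mpr hK⟩)
    exact (mul_eq_zero.mp hsum).resolve_left hne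
  · exact hf K hK

theorem IsHomogeneous.eq_zero_of_sum_eq_zero_of_succ [LinearOrder R] [IsStrictOrderedRing R]
    {j : ℕ} (hG : IsHomogeneous G (j + 1)) (hj : 2 * j < Fintype.card α) {f : Finset α → R}
    (hf : ∀ S, #S ≠ j → f S = 0) (hinv : ∀ g ∈ G, ∀ S, f (S.image g) = f S)
    (hsum : ∑ S, f S = 0) : f = 0 := by
  refine eq_zero_of_upOp_eq_zero hj hf (hG.eq_zero_of_sum_eq_zero
    (fun K hK => upOp_eq_zero_of_card_ne hf hK) (fun g hg => upOp_image g (hinv g hg)) ?_)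
  calc ∑ K, upOp f K = ∑ S, (Fintype.card α - j : R) * f S := by
        rw [sum_upOp]
        refine sum_congr rfl fun S _ => ?_
        by_cases hS : #S = j
        · rw [hS]
        · simp [hf S hS]
    _ = 0 := by rw [← mul_sum, hsum, mul_zero]

theorem IsHomogeneous.of_succ {j : ℕ} (hG : IsHomogeneous G (j + 1))
    (hj : 2 * j < Fintype.card α) : IsHomogeneous G j := by
  classical
  intro S T hS hT
  by_contra! hST
  set O := univ.filter fun B => ∃ g ∈ G, S.image g = B
  set L := powersetCard j (univ : Finset α)
  have hO : ∀ g ∈ G, ∀ B, B.image g ∈ O ↔ B ∈ O := by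
    intro g hg B
    simp only [O, mem_filter_univ]
    constructor
    · rintro ⟨h, hh, hB⟩
      refine ⟨g⁻¹ * h, mul_mem (inv_mem hg) hh, ?_⟩
      rw [coe_mul, ← image_image, hB, image_image, ← coe_mul, inv_mul_cancel, coe_one, image_id]
    · rintro ⟨h, hh, rfl⟩
      exact ⟨g * h, mul_mem hg hh, by rw [coe_mul, image_image]⟩
  have hL : ∀ g : Perm α, ∀ B, B.image g ∈ L ↔ B ∈ L := by
    intro g B
    simp only [L, mem_powersetCard_univ, card_image_of_injective _ g.injective]
  have hOL : O ⊆ L := by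
    intro B hB
    obtain ⟨g, -, rfl⟩ := (mem_filter_univ B).mp hB
    rw [mem_powersetCard_univ, card_image_of_injective _ g.injective, hS]
  let f : Finset α → ℤ := fun B =>
    (if B ∈ O then (#L : ℤ) else 0) - (if B ∈ L then (#O : ℤ) else 0)
  have hf : f = 0 := by
    refine hG.eq_zero_of_sum_eq_zero_of_succ hj (fun B hB => ?_) (fun g hg B => ?_) ?_
    · have hBL : B ∉ L := mt mem_powersetCard_univ.mp hB
      simp [f, hBL, mt (@hOL B) hBL]
    · simp only [f, hO g hg, hL g]
    · simp only [f, sum_sub_distrib, sum_ite_mem, univ_inter, sum_const, nsmul_eq_mul]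
      ring
  have hTO : T ∉ O := by
    simp only [O, mem_filter_univ, not_exists, not_and]
    exact hST
  have hSO : S ∈ O := (mem_filter_univ S).mpr ⟨1, one_mem G, by simp⟩
  have hfT := congr_fun hf T
  have hTL : T ∈ L := mem_powersetCard_univ.mpr hT
  simp only [f, hTO, hTL, if_false, if_true, zero_sub, Pi.zero_apply, neg_eq_zero,
    Nat.cast_eq_zero] at hfT
  exact (card_pos.mpr ⟨S, hSO⟩).ne' hfT

theorem IsHomogeneous.of_le {k r : ℕ} (hG : IsHomogeneous G k) (hr : r ≤ k)
    (hk : 2 * k ≤ Fintype.card α + 1) : IsHomogeneous G r := by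
  induction k with
  | zero => rwa [Nat.le_zero.mp hr]
  | succ k ih =>
    rcases hr.eq_or_lt with rfl | hr
    · exact hG
    · exact ih (hG.of_succ (by omega)) (by omega) (by omega)

theorem IsHomogeneous.of_compl {r : ℕ} (hG : IsHomogeneous G (Fintype.card α - r)) :
    IsHomogeneous G r := by
  intro S T hS hT
  obtain ⟨g, hg, hgST⟩ := hG Sᶜ Tᶜ (by rw [card_compl, hS]) (by rw [card_compl, hT])
  exact ⟨g, hg, compl_injective (by rwa [← image_perm_compl])⟩

theorem comp_inv_eq_of_image_filter_eq {β : Type*} [DecidableEq β] {N N' : α → β}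
    {a b : β} (hN : ∀ i, N i = a ∨ N i = b) (hN' : ∀ i, N' i = a ∨ N' i = b) {g : Equiv.Perm α}
    (hg : (univ.filter fun i => N i = b).image g = univ.filter fun i => N' i = b) :
    (fun i => N (g⁻¹ i)) = N' := by
  funext i
  have hb : N (g⁻¹ i) = b ↔ N' i = b := by
    rw [← mem_filter_univ (p := fun i => N' i = b), ← hg]
    simp only [mem_image, mem_filter_univ]
    exact ⟨fun h => ⟨_, h, g.apply_symm_apply i⟩, by rintro ⟨a, ha, rfl⟩; simpa⟩
  rcases hN' i with h' | h' <;> rcases hN (g⁻¹ i) with h | h <;> simp_all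

end Equiv.Perm

open Equiv.Perm

theorem transitive_on_neighbors_general (n k : ℕ) (hk2 : k ≤ n / 2)
    (G : Subgroup (Equiv.Perm (Fin n)))
    (hhom : ∀ S T : Finset (Fin n), S.card = k → T.card = k →
      ∃ g ∈ G, S.image g = T)
    (d : ℤ) (r : ℕ) (hr : r ≤ k ∨ (n - k ≤ r ∧ r ≤ n - 1)) :
    ∀ N N' : Fin n → ℤ,
      ((∀ i, N i = d ∨ N i = d + 1) ∧
        (Finset.univ.filter fun i => N i = d + 1).card = r) →
      ((∀ i, N' i = d ∨ N' i = d + 1) ∧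
        (Finset.univ.filter fun i => N' i = d + 1).card = r) →
      ∃ g ∈ G, (fun i => N (g⁻¹ i)) = N' := by
  rintro N N' ⟨hN, hNr⟩ ⟨hN', hN'r⟩
  have hG : IsHomogeneous G k := hhom
  have hk : 2 * k ≤ Fintype.card (Fin n) + 1 := by rw [Fintype.card_fin]; omega
  have hGr : IsHomogeneous G r := by
    rcases hr with hr | ⟨hr, -⟩
    · exact hG.of_le hr hk
    · refine IsHomogeneous.of_compl (hG.of_le ?_ hk)
      rw [Fintype.card_fin]; omega
  obtain ⟨g, hg, hgN⟩ := hGr _ _ hNr hN'r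
  exact ⟨g, hg, comp_inv_eq_of_image_filter_eq hN hN' hgN⟩

/-- If `G ≤ S_n` acts `k`-homogeneously on `{1,…,n}` with
`1 ≤ k ≤ ⌊n/2⌋`, then for every `d ∈ ℤ` and every `r ∈ {0,…,k} ∪ {n−k,…,n−1}`,
`G` acts transitively on the set of neighbors `𝒩_{r+nd}` (the integer vectors with
exactly `r` coordinates equal to `d+1` and `n−r` coordinates equal to `d`). -/
theorem transitive_on_neighbors (n k : ℕ) (hk1 : 1 ≤ k) (hk2 : k ≤ n / 2)
    (G : Subgroup (Equiv.Perm (Fin n)))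
    (hhom : ∀ S T : Finset (Fin n), S.card = k → T.card = k →
      ∃ g ∈ G, S.image g = T)
    (d : ℤ) (r : ℕ) (hr : r ≤ k ∨ (n - k ≤ r ∧ r ≤ n - 1)) :
    ∀ N N' : Fin n → ℤ,
      ((∀ i, N i = d ∨ N i = d + 1) ∧
        (Finset.univ.filter fun i => N i = d + 1).card = r) →
      ((∀ i, N' i = d ∨ N' i = d + 1) ∧
        (Finset.univ.filter fun i => N' i = d + 1).card = r) →
      ∃ g ∈ G, (fun i => N (g⁻¹ i)) = N' :=
  transitive_on_neighbors_general n k hk2 G hhom d r hr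
end

section
/- Let n ≥ 5, let X ⊆ ℝⁿ be a convex set invariant under every even permutation of coordinates (i.e., X^g = X for all g in the alternating group A_n), and let a ∈ ℝ be such that the point (a,…,a)ᵀ lies in X and maximizes x ↦ ∑ᵢ xᵢ over X. For each integer k with n⌊a⌋ ≤ k ≤ ⌊na⌋, write k = n⌊a⌋ + r and let N_k ∈ ℤⁿ be the point whose first r coordinates equal ⌊a⌋+1 and whose remaining n−r coordinates equal ⌊a⌋. Then: (1) X contains an integer point if and only if N_k ∈ X for some integer k with n⌊a⌋ ≤ k ≤ ⌊na⌋; and (2) if k* is the largest such k with N_{k*} ∈ X, then N_{k*} maximizes x ↦ ∑ᵢ xᵢ over X ∩ ℤⁿ. In particular, testing the at most n + 1 points N_{⌊na⌋}, …, N_{n⌊a⌋} either produces an optimal solution of the integer program or reveals its infeasibility. -/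
/-!
Among the integer points of `X` with a given coordinate sum, one minimising `∑ xᵢ²` is balanced
(any two coordinates differ by at most one). Otherwise a convex combination of it with an even
coordinate permutation of itself is an integer point of `X` with the same sum and a smaller
`∑ xᵢ²`: if some value repeats, the transposition moving a unit from a large to a small
coordinate can be made even; if all values are distinct, take the midpoint with a double
transposition of two pairs of equal parity. A balanced point with sum `k ≥ n⌊a⌋` is, since `A_n`
acts transitively on `r`-subsets, an even permutation of `N_k`; and every integer point has sum
at most `⌊na⌋` by maximality of `(a,…,a)`. Integer points of smaller sum are handled by averaging
over `A_n`, which puts a constant point of sum `< n⌊a⌋` into `X`, hence `N_{n⌊a⌋} = (⌊a⌋,…,⌊a⌋)`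
by convexity along the diagonal.
-/

open Finset
open scoped Pointwise

theorem exists_ne_two_dvd_sub {ι : Type*} (z : ι → ℤ) {s : Finset ι} (hs : 3 ≤ #s) :
    ∃ i ∈ s, ∃ j ∈ s, i ≠ j ∧ 2 ∣ z j - z i := by
  have hcard : #(univ : Finset (ZMod 2)) < #s := by rw [card_univ, ZMod.card]; omega
  obtain ⟨i, hi, j, hj, hij, h⟩ := exists_ne_map_eq_of_card_lt_of_maps_to hcard
    (f := fun i => (z i : ZMod 2)) (fun _ _ => mem_univ _)
  exact ⟨i, hi, j, hj, hij, (ZMod.intCast_eq_intCast_iff_dvd_sub _ _ 2).mp h⟩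

section Permutations

variable {ι : Type*} [DecidableEq ι]

theorem dvd_sub_swap_apply {z : ι → ℤ} {d : ℤ} {a b : ι} (h : d ∣ z b - z a) (k : ι) :
    d ∣ z (Equiv.swap a b k) - z k := by
  rw [Equiv.swap_apply_def]
  split_ifs with hka hkb
  · rwa [hka]
  · rwa [hkb, dvd_sub_comm]
  · simp

variable [Fintype ι]

theorem exists_mem_alternatingGroup_comp_eq {β : Type*} {v : ι → β} {p q : ι} (hpq : p ≠ q)
    (hv : v p = v q) (σ : Equiv.Perm ι) : ∃ g ∈ alternatingGroup ι, v ∘ ⇑g = v ∘ ⇑σ := by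
  by_cases hσ : σ ∈ alternatingGroup ι
  · exact ⟨σ, hσ, rfl⟩
  refine ⟨Equiv.swap p q * σ, ?_, ?_⟩
  · rw [Equiv.Perm.mem_alternatingGroup] at hσ ⊢
    rw [Equiv.Perm.sign_mul, Equiv.Perm.sign_swap hpq, Int.units_ne_iff_eq_neg.mp hσ, neg_mul_neg,
      one_mul]
  · rw [Equiv.Perm.coe_mul, ← Function.comp_assoc, Equiv.comp_swap_eq_update, hv,
      Function.update_eq_self, ← hv, Function.update_eq_self]

theorem exists_mem_alternatingGroup_mem_iff (h3 : 3 ≤ Fintype.card ι) {s t : Finset ι}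
    (hst : #s = #t) : ∃ g ∈ alternatingGroup ι, ∀ i, i ∈ s ↔ g i ∈ t := by
  have := Set.powersetCard.isPretransitive_alternatingGroup (α := ι) (n := #t)
    (by rwa [Nat.card_eq_fintype_card])
  obtain ⟨g, hg⟩ := MulAction.exists_smul_eq (alternatingGroup ι)
    (Set.powersetCard.ofCard hst) (Set.powersetCard.ofCard rfl)
  have hgst : g • s = t := congrArg Subtype.val hg
  refine ⟨g, g.2, fun i => ?_⟩
  rw [← hgst, ← Finset.smul_mem_smul_finset_iff g]
  rfl

end Permutations

section Convex

variable {ι : Type*} [Fintype ι]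

theorem sum_sq_combo_lt_of_ne {z y : ι → ℝ} (hsq : ∑ i, y i ^ 2 = ∑ i, z i ^ 2) (hyz : y ≠ z)
    {t : ℝ} (ht₀ : 0 < t) (ht₁ : t < 1) :
    ∑ i, ((1 - t) * z i + t * y i) ^ 2 < ∑ i, z i ^ 2 := by
  obtain ⟨i, hi⟩ := Function.ne_iff.mp hyz
  have hdist : 0 < ∑ i, (z i - y i) ^ 2 :=
    sum_pos' (fun _ _ => sq_nonneg _)
      ⟨i, mem_univ _, by have := sub_ne_zero.mpr hi.symm; positivity⟩
  have hterm : ∀ i, ((1 - t) * z i + t * y i) ^ 2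
      = (1 - t) * z i ^ 2 + t * y i ^ 2 - t * (1 - t) * (z i - y i) ^ 2 := fun i => by ring
  simp only [hterm, sum_sub_distrib, sum_add_distrib, ← mul_sum, hsq]
  nlinarith [mul_pos (mul_pos ht₀ (sub_pos.mpr ht₁)) hdist]

theorem sum_eq_card_mul_add_card_of_eq_or_eq_add_one {w : ι → ℤ} {f : ℤ}
    (hw : ∀ i, w i = f ∨ w i = f + 1) :
    ∑ i, w i = Fintype.card ι * f + #{i | w i = f + 1} := by
  have hterm : ∀ i, w i = f + if w i = f + 1 then 1 else 0 := fun i => by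
    rcases hw i with h | h <;> simp [h]
  rw [sum_congr rfl fun i _ => hterm i, sum_add_distrib, sum_const, sum_boole, card_univ,
    nsmul_eq_mul]

theorem eq_or_eq_add_one_of_balanced {w : ι → ℤ} (hbal : ∀ i j, w i ≤ w j + 1) {f : ℤ}
    (hlo : Fintype.card ι * f ≤ ∑ i, w i) (hhi : ∑ i, w i < Fintype.card ι * f + Fintype.card ι)
    (i : ι) : w i = f ∨ w i = f + 1 := by
  by_contra! hne
  rcases lt_or_gt_of_ne hne.1 with hlt | hgt
  · have : ∑ j, w j < ∑ _j : ι, f :=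
      sum_lt_sum (fun j _ => by linarith [hbal j i]) ⟨i, mem_univ _, hlt⟩
    rw [sum_const, card_univ, nsmul_eq_mul] at this
    omega
  · have : ∑ _j : ι, (f + 1) ≤ ∑ j, w j := sum_le_sum fun j _ => by have := hbal i j; omega
    rw [sum_const, card_univ, nsmul_eq_mul] at this
    linarith

variable [DecidableEq ι]

def IsAlternatingInvariant (X : Set (ι → ℝ)) : Prop :=
  ∀ g ∈ alternatingGroup ι, ∀ x ∈ X, x ∘ ⇑g ∈ X

variable {X : Set (ι → ℝ)}

theorem exists_sum_sq_lt_of_dvd (hX : Convex ℝ X) (hinv : IsAlternatingInvariant X) {z : ι → ℤ}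
    (hz : (fun i => (z i : ℝ)) ∈ X) {g : Equiv.Perm ι} (hg : g ∈ alternatingGroup ι)
    (hne : z ∘ ⇑g ≠ z) {d : ℤ} (hd : 2 ≤ d) (hdvd : ∀ i, d ∣ z (g i) - z i) :
    ∃ w : ι → ℤ, (fun i => (w i : ℝ)) ∈ X ∧ ∑ i, w i = ∑ i, z i ∧
      ∑ i, w i ^ 2 < ∑ i, z i ^ 2 := by
  -- `w = z + (z ∘ g - z) / d` is the convex combination `(1 - 1/d) z + (1/d) (z ∘ g)`.
  set t : ℝ := (d : ℝ)⁻¹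
  have hd₀ : (d : ℝ) ≠ 0 := by positivity
  have ht₀ : 0 < t := by positivity
  have ht₁ : t < 1 := inv_lt_one_of_one_lt₀ (by exact_mod_cast hd)
  have hw : ∀ i, ((z i + (z (g i) - z i) / d : ℤ) : ℝ) = (1 - t) * z i + t * z (g i) := by
    intro i
    rw [Int.cast_add, Int.cast_div (hdvd i) (by exact_mod_cast hd₀)]
    simp only [t]
    field_simp
    push_cast
    ring
  have hmem : (fun i => (1 - t) * (z i : ℝ) + t * z (g i)) ∈ X :=
    hX hz (hinv g hg _ hz) (by linarith) ht₀.le (by ring)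
  refine ⟨fun i => z i + (z (g i) - z i) / d, by simpa only [hw] using hmem, ?_, ?_⟩
  · have hsum : ∑ i, (z (g i) : ℝ) = ∑ i, (z i : ℝ) :=
      Equiv.sum_comp g (fun i => (z i : ℝ))
    have : ∑ i, ((1 - t) * (z i : ℝ) + t * z (g i)) = ∑ i, (z i : ℝ) := by
      rw [sum_add_distrib, ← mul_sum, ← mul_sum, hsum]
      ring
    exact_mod_cast (sum_congr rfl fun i _ => hw i).trans this
  · have hsq : ∑ i, (z (g i) : ℝ) ^ 2 = ∑ i, (z i : ℝ) ^ 2 :=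
      Equiv.sum_comp g (fun i => (z i : ℝ) ^ 2)
    have hne' : (fun i => (z (g i) : ℝ)) ≠ fun i => (z i : ℝ) := fun h =>
      hne (funext fun i => by exact_mod_cast congrFun h i)
    have := sum_sq_combo_lt_of_ne hsq hne' ht₀ ht₁
    simp only [← hw] at this
    exact_mod_cast this

theorem exists_sum_sq_lt (h4 : 4 ≤ Fintype.card ι) (hX : Convex ℝ X)
    (hinv : IsAlternatingInvariant X) {z : ι → ℤ} (hz : (fun i => (z i : ℝ)) ∈ X) {i j : ι}
    (hij : z j + 2 ≤ z i) :
    ∃ w : ι → ℤ, (fun i => (w i : ℝ)) ∈ X ∧ ∑ i, w i = ∑ i, z i ∧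
      ∑ i, w i ^ 2 < ∑ i, z i ^ 2 := by
  by_cases hrep : ∃ p q, p ≠ q ∧ z p = z q
  -- `z` composed with the even permutation is `z ∘ swap i j`: one unit moves from `i` to `j`.
  · obtain ⟨p, q, hpq, hzpq⟩ := hrep
    obtain ⟨g, hg, hzg⟩ := exists_mem_alternatingGroup_comp_eq hpq hzpq (Equiv.swap i j)
    have hzg' : ∀ k, z (g k) = z (Equiv.swap i j k) := congrFun hzg
    refine exists_sum_sq_lt_of_dvd hX hinv hz hg (fun h => ?_) (d := z i - z j) (by omega)
      fun k => hzg' k ▸ dvd_sub_swap_apply (by rw [← neg_sub (z i) (z j), dvd_neg]) k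
    have := hzg' i
    rw [show z (g i) = z i from congrFun h i, Equiv.swap_apply_left] at this
    omega
  -- All values distinct: the midpoint of `z` and `z ∘ (p q)(r s)` is integral.
  · push Not at hrep
    obtain ⟨p, -, q, -, hpq, hdpq⟩ := exists_ne_two_dvd_sub z (s := univ)
      (by rw [card_univ]; omega)
    obtain ⟨r, hr, s, hs, hrs, hdrs⟩ := exists_ne_two_dvd_sub z (s := univ.erase p)
      (by rw [card_erase_of_mem (mem_univ _), card_univ]; omega)
    have hpr : p ≠ r := fun h => (ne_of_mem_erase hr) h.symm
    have hps : p ≠ s := fun h => (ne_of_mem_erase hs) h.symm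
    have hg : Equiv.swap p q * Equiv.swap r s ∈ alternatingGroup ι := by
      simp [Equiv.Perm.mem_alternatingGroup, Equiv.Perm.sign_swap hpq, Equiv.Perm.sign_swap hrs]
    refine exists_sum_sq_lt_of_dvd hX hinv hz hg (fun h => ?_) le_rfl fun k => ?_
    · have := congrFun h p
      simp only [Function.comp_apply, Equiv.Perm.mul_apply, Equiv.swap_apply_of_ne_of_ne hpr hps,
        Equiv.swap_apply_left] at this
      exact hrep q p hpq.symm this
    · rw [Equiv.Perm.mul_apply, ← sub_add_sub_cancel _ (z (Equiv.swap r s k))]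
      exact (dvd_sub_swap_apply hdpq _).add (dvd_sub_swap_apply hdrs k)

theorem exists_balanced (h4 : 4 ≤ Fintype.card ι) (hX : Convex ℝ X)
    (hinv : IsAlternatingInvariant X) (z : ι → ℤ) (hz : (fun i => (z i : ℝ)) ∈ X) :
    ∃ w : ι → ℤ, (fun i => (w i : ℝ)) ∈ X ∧ ∑ i, w i = ∑ i, z i ∧ ∀ i j, w i ≤ w j + 1 := by
  induction hm : (∑ i, z i ^ 2).toNat using Nat.strong_induction_on generalizing z with
  | _ m ih =>
  by_cases hbal : ∀ i j, z i ≤ z j + 1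
  · exact ⟨z, hz, rfl, hbal⟩
  push Not at hbal
  obtain ⟨i, j, hij⟩ := hbal
  obtain ⟨w, hw, hsum, hsq⟩ := exists_sum_sq_lt h4 hX hinv hz (i := i) (j := j) (by omega)
  have hw₀ : 0 ≤ ∑ i, w i ^ 2 := sum_nonneg fun i _ => sq_nonneg (w i)
  obtain ⟨w', hw', hsum', hbal'⟩ := ih _ (by omega) w hw rfl
  exact ⟨w', hw', hsum'.trans hsum, hbal'⟩

theorem exists_mem_alternatingGroup_comp_eq_of_card_eq (h3 : 3 ≤ Fintype.card ι) {v w : ι → ℤ}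
    {f : ℤ} (hv : ∀ i, v i = f ∨ v i = f + 1) (hw : ∀ i, w i = f ∨ w i = f + 1)
    (hcard : #{i | w i = f + 1} = #{i | v i = f + 1}) :
    ∃ g ∈ alternatingGroup ι, v ∘ ⇑g = w := by
  obtain ⟨g, hg, hgw⟩ := exists_mem_alternatingGroup_mem_iff h3 hcard
  refine ⟨g, hg, funext fun i => ?_⟩
  have := hgw i
  simp only [mem_filter, mem_univ, true_and] at this
  rw [Function.comp_apply]
  rcases hv (g i) with h | h <;> rcases hw i with h' | h' <;> omega

theorem IsAlternatingInvariant.const_mem (h3 : 3 ≤ Fintype.card ι) (hX : Convex ℝ X)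
    (hinv : IsAlternatingInvariant X) {y : ι → ℝ} (hy : y ∈ X) :
    (fun _ => (∑ i, y i) / Fintype.card ι) ∈ X := by
  set A := alternatingGroup ι
  have hA : (0 : ℝ) < Fintype.card A := by exact_mod_cast Fintype.card_pos
  have hmem : ∑ g : A, (Fintype.card A : ℝ)⁻¹ • (y ∘ ⇑(g : Equiv.Perm ι)) ∈ X :=
    hX.sum_mem (fun _ _ => by positivity) (by simp [card_univ, hA.ne'])
      fun g _ => hinv g g.2 y hy
  have := alternatingGroup.isPretransitive_of_three_le_card ι
    (by rwa [Nat.card_eq_fintype_card])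
  have horbit : ∀ k k',
      ∑ g : A, y ((g : Equiv.Perm ι) k) = ∑ g : A, y ((g : Equiv.Perm ι) k') := by
    intro k k'
    obtain ⟨h, rfl⟩ := MulAction.exists_smul_eq A k k'
    exact (Equiv.sum_comp (Equiv.mulRight h) fun g : A => y ((g : Equiv.Perm ι) k)).symm
  have htotal : ∑ k, ∑ g : A, y ((g : Equiv.Perm ι) k) = Fintype.card A * ∑ i, y i := by
    rw [sum_comm]
    simp only [Equiv.sum_comp, sum_const, card_univ, nsmul_eq_mul]
  convert hmem using 1
  funext k
  simp only [Finset.sum_apply, Pi.smul_apply, Function.comp_apply, smul_eq_mul, ← mul_sum]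
  rw [sum_congr rfl fun k' _ => horbit k' k, sum_const, card_univ, nsmul_eq_mul] at htotal
  field_simp
  linarith

theorem IsAlternatingInvariant.const_mem_of_sum_le (h3 : 3 ≤ Fintype.card ι) (hX : Convex ℝ X)
    (hinv : IsAlternatingInvariant X) {y : ι → ℝ} (hy : y ∈ X) {a t : ℝ}
    (ha : (fun _ => a) ∈ X) (hyt : ∑ i, y i ≤ Fintype.card ι * t) (hta : t ≤ a) :
    (fun _ : ι => t) ∈ X := by
  have hdiag : Convex ℝ ((LinearMap.pi fun _ : ι => LinearMap.id) ⁻¹' X) := hX.linear_preimage _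
  refine hdiag.ordConnected.out (hinv.const_mem h3 hX hy) ha ⟨?_, hta⟩
  rw [← div_eq_mul_inv, div_le_iff₀' (by positivity)]
  exact hyt

end Convex

/-- The point `N_{n f + r}` of the statement. -/
def stairVec (n : ℕ) (f : ℤ) (r : ℕ) : Fin n → ℤ := fun i => if (i : ℕ) < r then f + 1 else f

theorem stairVec_eq_or_eq (n : ℕ) (f : ℤ) (r : ℕ) (i : Fin n) :
    stairVec n f r i = f ∨ stairVec n f r i = f + 1 := by
  unfold stairVec
  split_ifs <;> simp

theorem stairVec_zero (n : ℕ) (f : ℤ) : stairVec n f 0 = fun _ => f := rfl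

theorem card_stairVec_eq_add_one {n r : ℕ} (hr : r ≤ n) (f : ℤ) :
    #{i | stairVec n f r i = f + 1} = r := by
  simp [stairVec, Fin.card_filter_val_lt, hr]

theorem sum_stairVec {n r : ℕ} (hr : r ≤ n) (f : ℤ) : ∑ i, stairVec n f r i = n * f + r := by
  rw [sum_eq_card_mul_add_card_of_eq_or_eq_add_one (stairVec_eq_or_eq n f r),
    card_stairVec_eq_add_one hr, Fintype.card_fin]

theorem stairVec_mem {n : ℕ} (h4 : 4 ≤ n) {X : Set (Fin n → ℝ)} (hX : Convex ℝ X)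
    (hinv : IsAlternatingInvariant X) {x : Fin n → ℤ} (hx : (fun i => (x i : ℝ)) ∈ X) {f : ℤ}
    (hlo : n * f ≤ ∑ i, x i) (hhi : ∑ i, x i < n * f + n) :
    (fun i => (stairVec n f (∑ i, x i - n * f).toNat i : ℝ)) ∈ X := by
  obtain ⟨w, hw, hsum, hbal⟩ := exists_balanced (by simpa) hX hinv x hx
  have hw₂ := eq_or_eq_add_one_of_balanced hbal (f := f) (by simpa [hsum]) (by simpa [hsum])
  have hr : (∑ i, x i - n * f).toNat ≤ n := by omega
  have hcard : #{i | stairVec n f (∑ i, x i - n * f).toNat i = f + 1} = #{i | w i = f + 1} := by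
    have := sum_eq_card_mul_add_card_of_eq_or_eq_add_one hw₂
    rw [Fintype.card_fin] at this
    rw [card_stairVec_eq_add_one hr]
    omega
  obtain ⟨g, hg, hwg⟩ := exists_mem_alternatingGroup_comp_eq_of_card_eq
    (by rw [Fintype.card_fin]; omega) hw₂ (stairVec_eq_or_eq n f _) hcard
  rw [← hwg]
  exact hinv g hg _ hw

/-- Let `n ≥ 5` and `X ⊆ ℝⁿ` convex and invariant under all even coordinate
permutations (the alternating group `A_n`), and let `(a,…,a) ∈ X` maximize `x ↦ ∑ xᵢ`
over `X`. For `n⌊a⌋ ≤ k ≤ ⌊na⌋` write `k = n⌊a⌋ + r` and let `N k` have its first `r`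
coordinates equal to `⌊a⌋+1` and the rest equal to `⌊a⌋`. Then (1) `X` contains an
integer point iff `N k ∈ X` for some such `k`, and (2) if `k*` is the largest such `k`
with `N k* ∈ X`, then `N k*` maximizes `x ↦ ∑ xᵢ` over `X ∩ ℤⁿ`. -/
theorem linear_algorithm_alternating_group (n : ℕ) (hn : 5 ≤ n)
    (X : Set (Fin n → ℝ)) (hX : Convex ℝ X)
    (hinv : ∀ g ∈ alternatingGroup (Fin n),
      (fun x : Fin n → ℝ => fun i => x (g⁻¹ i)) '' X = X)
    (a : ℝ) (ha : (fun _ : Fin n => a) ∈ X)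
    (hmax : ∀ x ∈ X, ∑ i, x i ≤ n * a)
    (N : ℤ → Fin n → ℤ)
    (hN : ∀ k : ℤ, ∀ i : Fin n,
      N k i = if (i : ℕ) < (k - n * ⌊a⌋).toNat then ⌊a⌋ + 1 else ⌊a⌋) :
    ((∃ x : Fin n → ℤ, (fun i => (x i : ℝ)) ∈ X) ↔
      ∃ k : ℤ, n * ⌊a⌋ ≤ k ∧ k ≤ ⌊(n : ℝ) * a⌋ ∧ (fun i => (N k i : ℝ)) ∈ X) ∧
    (∀ kstar : ℤ, n * ⌊a⌋ ≤ kstar → kstar ≤ ⌊(n : ℝ) * a⌋ →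
      (fun i => (N kstar i : ℝ)) ∈ X →
      (∀ k : ℤ, kstar < k → k ≤ ⌊(n : ℝ) * a⌋ → (fun i => (N k i : ℝ)) ∉ X) →
      ∀ x : Fin n → ℤ, (fun i => (x i : ℝ)) ∈ X → ∑ i, x i ≤ ∑ i, N kstar i) := by
  have hinv' : IsAlternatingInvariant X := fun g hg x hx => by
    rw [← hinv g⁻¹ (inv_mem hg)]
    exact ⟨x, hx, by simp [Function.comp_def]⟩
  have hNk : ∀ k, N k = stairVec n ⌊a⌋ (k - n * ⌊a⌋).toNat := fun k => funext (hN k)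
  have hfloor_lo : (n * ⌊a⌋ : ℤ) ≤ ⌊(n : ℝ) * a⌋ := Int.le_floor.mpr <| by
    push_cast
    exact mul_le_mul_of_nonneg_left (Int.floor_le a) n.cast_nonneg
  have hfloor_hi : ⌊(n : ℝ) * a⌋ < n * ⌊a⌋ + n := Int.floor_lt.mpr <| by
    push_cast
    nlinarith [Int.lt_floor_add_one a, show (0 : ℝ) < n by positivity]
  have hsum_le : ∀ x : Fin n → ℤ, (fun i => (x i : ℝ)) ∈ X → ∑ i, x i ≤ ⌊(n : ℝ) * a⌋ :=
    fun x hx => Int.le_floor.mpr (by simpa using hmax _ hx)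
  have hN_mem : ∀ x : Fin n → ℤ, (fun i => (x i : ℝ)) ∈ X → n * ⌊a⌋ ≤ ∑ i, x i →
      (fun i => (N (∑ i, x i) i : ℝ)) ∈ X := fun x hx hlo => by
    rw [hNk]
    exact stairVec_mem (by omega) hX hinv' hx hlo ((hsum_le x hx).trans_lt hfloor_hi)
  refine ⟨⟨fun ⟨x, hx⟩ => ?_, fun ⟨k, _, _, hk⟩ => ⟨N k, hk⟩⟩,
    fun k hk_lo hk_hi _ hk_max x hx => ?_⟩
  · by_cases hlo : n * ⌊a⌋ ≤ ∑ i, x i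
    · exact ⟨_, hlo, hsum_le x hx, hN_mem x hx hlo⟩
    refine ⟨n * ⌊a⌋, le_rfl, hfloor_lo, ?_⟩
    rw [hNk, sub_self, Int.toNat_zero, stairVec_zero]
    refine hinv'.const_mem_of_sum_le (by rw [Fintype.card_fin]; omega) hX hx ha ?_ (Int.floor_le a)
    rw [Fintype.card_fin]
    exact_mod_cast (not_le.mp hlo).le
  · rw [hNk, sum_stairVec (by omega)]
    by_contra! hlt
    exact hk_max _ (by omega) (hsum_le x hx) (hN_mem x hx (by omega))
end
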